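/- arXiv:2411.08770 — 9 statements merged into one kernel-verified Lean document; each statement's English description precedes it below -/
import Mathlib

section
/- Let 𝔸 and O be types. For every type X and every function c : X → Set ((𝔸 × X) ⊕ O) there exists a unique function f : X → Set (List 𝔸 × O) such that for all x : X and o : O, ([], o) ∈ f x ↔ Sum.inr o ∈ c x, and for all x : X, a : 𝔸, w : List 𝔸, o : O, (a :: w, o) ∈ f x ↔ ∃ x', Sum.inl (a, x') ∈ c x ∧ (w, o) ∈ f x'. -/
universe u

def machineAccepts {𝔸 O X : Type u} (c : X → Set ((𝔸 × X) ⊕ O)) :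
    List 𝔸 → X → O → Prop
  | [], x, o => Sum.inr o ∈ c x
  | a :: w, x, o => ∃ x', Sum.inl (a, x') ∈ c x ∧ machineAccepts c w x' o

/-- Finality of `List 𝔸 × O` for the Kleisli lifting of the machine endofunctor
`B X = (𝔸 × X) ⊕ O` over the powerset monad: for every coalgebra
`c : X → Set ((𝔸 × X) ⊕ O)` there is a unique Kleisli coalgebra homomorphism
`f : X → Set (List 𝔸 × O)` into the final coalgebra. -/
theorem machine_final_coalgebra_unique_hom (𝔸 O X : Type u)
    (c : X → Set ((𝔸 × X) ⊕ O)) :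
    ∃! f : X → Set (List 𝔸 × O),
      (∀ (x : X) (o : O), (([] : List 𝔸), o) ∈ f x ↔ Sum.inr o ∈ c x) ∧
      (∀ (x : X) (a : 𝔸) (w : List 𝔸) (o : O),
        (a :: w, o) ∈ f x ↔ ∃ x' : X, Sum.inl (a, x') ∈ c x ∧ (w, o) ∈ f x') := by
  refine ⟨fun x => {p | machineAccepts c p.1 x p.2}, ⟨?_, ?_⟩, ?_⟩
  · intro x o; rfl
  · intro x a w o; rfl
  · rintro g ⟨h1, h2⟩
    funext x
    ext ⟨w, o⟩
    induction w generalizing x with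
    | nil => simpa [machineAccepts] using h1 x o
    | cons a w ih =>
      simp only [h2, Set.mem_setOf_eq, machineAccepts]
      constructor
      · rintro ⟨x', hx', hw⟩; exact ⟨x', hx', (ih x').mp hw⟩
      · rintro ⟨x', hx', hw⟩; exact ⟨x', hx', (ih x').mpr hw⟩
end

section
/- Let C be a category, (T, η, μ) a monad on C, and G, B endofunctors on C with a natural isomorphism ρ : B ⋙ G ≅ G ⋙ B (i.e. ρ_X : G(B X) ≅ B(G X) naturally in X). Let B̄ be a Kleisli lifting of B along T, i.e. an endofunctor on the Kleisli category Kl(T) with B̄ ∘ Free = Free ∘ B, where Free : C ⥤ Kl(T) is the free functor. Then the assignment B̃ X = B X on objects and, for f : X ⟶ Y in Kl(T^G) (i.e. f : G X ⟶ G Y in Kl(T)), B̃ f = Free(ρ_X) ≫ B̄(f) ≫ Free(ρ_Y⁻¹), defines an endofunctor B̃ on Kl(T^G), and B̃ is a Kleisli lifting of B for the relative monad, i.e. B̃ ∘ L = L ∘ B. -/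
open CategoryTheory

universe v u

variable {C : Type u} [Category.{v} C]

/-- The Kleisli category of the relative monad `T^G` induced by a monad `T` and
an endofunctor `G`: objects are those of `C`, and `Hom(X, Y) = Kl(T)(G X, G Y)`. -/
def RelKleisli (T : Monad C) (G : C ⥤ C) : Type u :=
  InducedCategory (Kleisli T) (fun X : C => (Kleisli.mk T (G.obj X) : Kleisli T))

instance (T : Monad C) (G : C ⥤ C) : Category (RelKleisli T G) :=
  inferInstanceAs (Category (InducedCategory (Kleisli T) (fun X : C => (Kleisli.mk T (G.obj X) : Kleisli T))))

/-- The functor `L : C ⥤ Kl(T^G)` given by `L X = X` and `L f = Free (G f)`. -/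
def relKleisliFree (T : Monad C) (G : C ⥤ C) : C ⥤ RelKleisli T G where
  obj X := X
  map f := InducedCategory.homMk ((Kleisli.Adjunction.toKleisli T).map (G.map f))
  map_id X := by simp only [CategoryTheory.Functor.map_id]; rfl
  map_comp f g := by simp only [CategoryTheory.Functor.map_comp]; rfl

/-- The candidate lifting on morphisms: for `f : X ⟶ Y` in `Kl(T^G)`,
`B̃ f = Free(ρ_X) ≫ B̄(f) ≫ Free(ρ_Y⁻¹)`. -/
def relKleisliLiftMap (T : Monad C) (G B : C ⥤ C) (ρ : B ⋙ G ≅ G ⋙ B)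
    (Bbar : Kleisli T ⥤ Kleisli T)
    (hBbar : Kleisli.Adjunction.toKleisli T ⋙ Bbar =
      B ⋙ Kleisli.Adjunction.toKleisli T)
    {X Y : C}
    (f : (relKleisliFree T G).obj X ⟶ (relKleisliFree T G).obj Y) :
    (relKleisliFree T G).obj (B.obj X) ⟶ (relKleisliFree T G).obj (B.obj Y) :=
  InducedCategory.homMk <| show (Kleisli.Adjunction.toKleisli T).obj (G.obj (B.obj X)) ⟶
      (Kleisli.Adjunction.toKleisli T).obj (G.obj (B.obj Y)) from
    (Kleisli.Adjunction.toKleisli T).map (ρ.hom.app X) ≫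
      eqToHom (Functor.congr_obj hBbar (G.obj X)).symm ≫
      Bbar.map (show (Kleisli.Adjunction.toKleisli T).obj (G.obj X) ⟶
          (Kleisli.Adjunction.toKleisli T).obj (G.obj Y) from f.hom) ≫
      eqToHom (Functor.congr_obj hBbar (G.obj Y)) ≫
      (Kleisli.Adjunction.toKleisli T).map (ρ.inv.app Y)

/-!
`Kl(T^G)` is `Kl(T)` restricted along `X ↦ G X`, so it embeds fully faithfully into `Kl(T)`.
Since `B̄ ∘ Free = Free ∘ B`, the maps `Free(ρ_X)` are isomorphisms `G (B X) ≅ B̄ (G X)` in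
`Kl(T)`, natural in `X ∈ C`. Conjugating `B̄` by them and pulling back along the embedding gives
`B̃`, which is a functor because `B̄` is; that `B̃` lifts `B` is exactly the naturality of these
isomorphisms.
-/

namespace CategoryTheory.Functor.FullyFaithful

variable {A A' D : Type*} [Category A] [Category A'] [Category D] {i : A ⥤ D}
  (hi : i.FullyFaithful)

def lift (H : A' ⥤ D) (obj : A' → A) (e : ∀ X, i.obj (obj X) ≅ H.obj X) : A' ⥤ A where
  obj := obj
  map f := hi.preimage ((e _).hom ≫ H.map f ≫ (e _).inv)
  map_id X := hi.map_injective (by simp)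
  map_comp f g := hi.map_injective (by simp)

end CategoryTheory.Functor.FullyFaithful

section RelKleisliLift

variable {T : Monad C} {G B : C ⥤ C} (ρ : B ⋙ G ≅ G ⋙ B) (Bbar : Kleisli T ⥤ Kleisli T)
  (hBbar : Kleisli.Adjunction.toKleisli T ⋙ Bbar = B ⋙ Kleisli.Adjunction.toKleisli T)

@[simps! hom_app inv_app]
def kleisliLiftIso :
    B ⋙ G ⋙ Kleisli.Adjunction.toKleisli T ≅ G ⋙ Kleisli.Adjunction.toKleisli T ⋙ Bbar :=
  Functor.isoWhiskerRight ρ (Kleisli.Adjunction.toKleisli T) ≪≫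
    Functor.isoWhiskerLeft G (eqToIso hBbar.symm)

def relKleisliLift : RelKleisli T G ⥤ RelKleisli T G :=
  (fullyFaithfulInducedFunctor _).lift (inducedFunctor _ ⋙ Bbar) B.obj
    (kleisliLiftIso ρ Bbar hBbar).app

lemma relKleisliLift_map {X Y : C}
    (f : (relKleisliFree T G).obj X ⟶ (relKleisliFree T G).obj Y) :
    (relKleisliLift ρ Bbar hBbar).map f = relKleisliLiftMap T G B ρ Bbar hBbar f := by
  apply InducedCategory.hom_ext
  change ((kleisliLiftIso ρ Bbar hBbar).hom.app X ≫ Bbar.map f.hom ≫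
    (kleisliLiftIso ρ Bbar hBbar).inv.app Y : _ ⟶ _) = _
  simp only [kleisliLiftIso_hom_app, kleisliLiftIso_inv_app, Category.assoc]
  rfl

lemma relKleisliFree_comp_relKleisliLift :
    relKleisliFree T G ⋙ relKleisliLift ρ Bbar hBbar = B ⋙ relKleisliFree T G := by
  refine CategoryTheory.Functor.ext (fun _ => rfl) fun X Y f => ?_
  -- `erw`: the objects agree only after unfolding `relKleisliLift`
  erw [eqToHom_refl, eqToHom_refl, Category.id_comp, Category.comp_id]
  apply InducedCategory.hom_ext
  exact NatIso.naturality_2 (kleisliLiftIso ρ Bbar hBbar) f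

end RelKleisliLift

/-- If `G` preserves `B` (via `ρ : B ⋙ G ≅ G ⋙ B`) and `B` has a Kleisli lifting
`B̄` on `Kl(T)`, then `X ↦ B X`, `f ↦ Free(ρ_X) ≫ B̄(f) ≫ Free(ρ_Y⁻¹)` defines an
endofunctor `B̃` on `Kl(T^G)`, which moreover is a Kleisli lifting of `B` for the
relative monad, i.e. `L ⋙ B̃ = B ⋙ L`. -/
theorem relative_kleisli_lifting (T : Monad C) (G B : C ⥤ C)
    (ρ : B ⋙ G ≅ G ⋙ B) (Bbar : Kleisli T ⥤ Kleisli T)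
    (hBbar : Kleisli.Adjunction.toKleisli T ⋙ Bbar =
      B ⋙ Kleisli.Adjunction.toKleisli T) :
    ∃ (Btilde : RelKleisli T G ⥤ RelKleisli T G)
      (hobj : ∀ X : C, Btilde.obj ((relKleisliFree T G).obj X) =
        (relKleisliFree T G).obj (B.obj X)),
      (∀ (X Y : C) (f : (relKleisliFree T G).obj X ⟶ (relKleisliFree T G).obj Y),
        Btilde.map f =
          eqToHom (hobj X) ≫ relKleisliLiftMap T G B ρ Bbar hBbar f ≫
            eqToHom (hobj Y).symm) ∧
      relKleisliFree T G ⋙ Btilde = B ⋙ relKleisliFree T G :=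
  ⟨relKleisliLift ρ Bbar hBbar, fun _ => rfl, fun _ _ f => by
    erw [eqToHom_refl, eqToHom_refl, Category.id_comp, Category.comp_id]
    exact relKleisliLift_map ρ Bbar hBbar f,
    relKleisliFree_comp_relKleisliLift ρ Bbar hBbar⟩
end

section
/- Let F : Type u ⥤ Type u be a functor that preserves weak pullbacks. Then for all types X, Y, X', Y' and all functions f : X → X', g : Y → Y', the square with top edge λ_{X,Y} = ⟨F.map Prod.fst, F.map Prod.snd⟩ : F(X × Y) → F X × F Y, left edge F.map (Prod.map f g) : F(X × Y) → F(X' × Y'), bottom edge λ_{X',Y'} : F(X' × Y') → F X' × F Y', and right edge Prod.map (F.map f) (F.map g) commutes and is a weak pullback: for every u : F(X' × Y') and every pair (t₁, t₂) : F X × F Y with λ_{X',Y'} u = (F.map f t₁, F.map g t₂), there exists w : F(X × Y) with F.map (Prod.map f g) w = u, F.map Prod.fst w = t₁ and F.map Prod.snd w = t₂. -/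
open CategoryTheory

universe u

/-- A commuting square of functions that is a weak pullback. -/
def IsWeakPullback {P X Y Z : Type u} (p : P → X) (q : P → Y)
    (f : X → Z) (g : Y → Z) : Prop :=
  (∀ w, f (p w) = g (q w)) ∧
  ∀ x y, f x = g y → ∃ w, p w = x ∧ q w = y

/-- A functor on types preserves weak pullbacks if it maps weak pullback
squares to weak pullback squares. -/
def PreservesWeakPullbacks (F : Type u ⥤ Type u) : Prop :=
  ∀ {P X Y Z : Type u} (p : P → X) (q : P → Y) (f : X → Z) (g : Y → Z),
    IsWeakPullback p q f g →
    IsWeakPullback (F.map (TypeCat.ofHom p)) (F.map (TypeCat.ofHom q)) (F.map (TypeCat.ofHom f)) (F.map (TypeCat.ofHom g))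

/-!
The square for `Prod.map f g` factors through `X × Y'` as the square for `Prod.map f id`
followed by the square for `Prod.map id g`.  Each of these is a weak pullback of types
(over `Prod.fst`, resp. `Prod.snd`), so `F` keeps it a weak pullback, and an element of
`F (X' × Y')` over `(t₁, t₂)` is lifted in two steps: first to `F (X × Y')` over `t₁`,
then to `F (X × Y)` over `t₂`.
-/

namespace CategoryTheory.Functor

variable (F : Type u ⥤ Type u)

theorem map_map_eq_of_comp_eq {A B C D : Type u} {a : A → B} {b : B → C} {c : A → D}
    {d : D → C} (h : b ∘ a = d ∘ c) (z : F.obj A) :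
    F.map (TypeCat.ofHom b) (F.map (TypeCat.ofHom a) z) =
      F.map (TypeCat.ofHom d) (F.map (TypeCat.ofHom c) z) := by
  rw [← F.map_comp_apply, ← F.map_comp_apply]
  exact congrArg (fun k => F.map (TypeCat.ofHom k) z) h

theorem map_map_eq_map_of_comp_eq {A B C : Type u} {a : A → B} {b : B → C} {c : A → C}
    (h : b ∘ a = c) (z : F.obj A) :
    F.map (TypeCat.ofHom b) (F.map (TypeCat.ofHom a) z) = F.map (TypeCat.ofHom c) z := by
  rw [← F.map_comp_apply]
  exact congrArg (fun k => F.map (TypeCat.ofHom k) z) h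

/-- The map `λ_{X,Y}` of the statement. -/
abbrev typesProdComparison (X Y : Type u) (w : F.obj (X × Y)) : F.obj X × F.obj Y :=
  (F.map (TypeCat.ofHom _root_.Prod.fst) w, F.map (TypeCat.ofHom _root_.Prod.snd) w)

end CategoryTheory.Functor

theorem isWeakPullback_prodMap_id_fst {X X' : Type u} (f : X → X') (Y : Type u) :
    IsWeakPullback (Prod.map f (id : Y → Y)) Prod.fst Prod.fst f :=
  ⟨fun _ => rfl, fun x y hxy => ⟨(y, x.2), Prod.ext hxy.symm rfl, rfl⟩⟩

theorem isWeakPullback_prodMap_id_snd {Y Y' : Type u} (g : Y → Y') (X : Type u) :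
    IsWeakPullback (Prod.map (id : X → X) g) Prod.snd Prod.snd g :=
  ⟨fun _ => rfl, fun x y hxy => ⟨(x.1, y), Prod.ext rfl hxy.symm, rfl⟩⟩

theorem isWeakPullback_typesProdComparison {F : Type u ⥤ Type u} (hF : PreservesWeakPullbacks F)
    {X Y X' Y' : Type u} (f : X → X') (g : Y → Y') :
    IsWeakPullback (F.map (TypeCat.ofHom (Prod.map f g))) (F.typesProdComparison X Y)
      (F.typesProdComparison X' Y') (Prod.map (F.map (TypeCat.ofHom f)) (F.map (TypeCat.ofHom g))) := by
  refine ⟨fun w => Prod.ext (F.map_map_eq_of_comp_eq (Prod.map_fst' f g) w)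
    (F.map_map_eq_of_comp_eq (Prod.map_snd' f g) w), ?_⟩
  rintro u ⟨t₁, t₂⟩ h
  obtain ⟨hu₁, hu₂⟩ := Prod.mk.inj h
  obtain ⟨v, rfl, hv₁⟩ := (hF _ _ _ _ (isWeakPullback_prodMap_id_fst f Y')).2 u t₁ hu₁
  have hv₂ : F.map (TypeCat.ofHom Prod.snd) v = F.map (TypeCat.ofHom g) t₂ := by
    rwa [F.map_map_eq_map_of_comp_eq (Prod.map_snd' f id)] at hu₂
  obtain ⟨w, rfl, hw₂⟩ := (hF _ _ _ _ (isWeakPullback_prodMap_id_snd g X)).2 v t₂ hv₂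
  refine ⟨w, (F.map_map_eq_map_of_comp_eq (a := Prod.map id g) (b := Prod.map f id) rfl w).symm,
    Prod.ext ?_ hw₂⟩
  rw [← hv₁]
  exact (F.map_map_eq_map_of_comp_eq (Prod.map_fst' id g) w).symm

/-- If `F` preserves weak pullbacks, then the square with top edge
`λ_{X,Y} = ⟨F.map Prod.fst, F.map Prod.snd⟩`, left edge `F.map (Prod.map f g)`,
bottom edge `λ_{X',Y'}` and right edge `Prod.map (F.map f) (F.map g)` commutes
and is a weak pullback. -/
theorem lambda_square_weakPullback (F : Type u ⥤ Type u)
    (hF : PreservesWeakPullbacks F) {X Y X' Y' : Type u}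
    (f : X → X') (g : Y → Y') :
    (∀ w : F.obj (X × Y),
      (F.map (TypeCat.ofHom Prod.fst) (F.map (TypeCat.ofHom (Prod.map f g)) w),
        F.map (TypeCat.ofHom Prod.snd) (F.map (TypeCat.ofHom (Prod.map f g)) w)) =
      Prod.map (F.map (TypeCat.ofHom f)) (F.map (TypeCat.ofHom g)) (F.map (TypeCat.ofHom Prod.fst) w, F.map (TypeCat.ofHom Prod.snd) w)) ∧
    ∀ (u : F.obj (X' × Y')) (t₁ : F.obj X) (t₂ : F.obj Y),
      (F.map (TypeCat.ofHom Prod.fst) u, F.map (TypeCat.ofHom Prod.snd) u) = (F.map (TypeCat.ofHom f) t₁, F.map (TypeCat.ofHom g) t₂) →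
      ∃ w : F.obj (X × Y),
        F.map (TypeCat.ofHom (Prod.map f g)) w = u ∧
        F.map (TypeCat.ofHom Prod.fst) w = t₁ ∧ F.map (TypeCat.ofHom Prod.snd) w = t₂ := by
  obtain ⟨comm, lift⟩ := isWeakPullback_typesProdComparison hF f g
  refine ⟨comm, fun u t₁ t₂ h => ?_⟩
  obtain ⟨w, hw, hlam⟩ := lift u (t₁, t₂) h
  exact ⟨w, hw, congrArg Prod.fst hlam, congrArg Prod.snd hlam⟩
end

section
/- Let C be a category with binary products, (T, η, μ) a monad on C, I an endofunctor on C, Φ : Cᵒᵖ ⥤ PartOrd a functor such that every reindexing map f⋆ := Φ(f) has a left adjoint ∃_f (a Galois connection ∃_f ⊣ f⋆ between the fibres), and θ_{X,Y} : Hom_C(X, T Y) ≃ Φ(X ⨯ I Y) a family of bijections satisfying (A3.3a) θ_{X,Y}(h ∘ f) = (f ⨯ 1_{I Y})⋆(θ_{X',Y}(h)) for all f : X → X', h : X' → T Y, and (A3.3b) θ_{X,Y'}(T g ∘ h) = ∃_{1_X ⨯ I g}(θ_{X,Y}(h)) for all g : Y → Y', h : X → T Y. Define the membership relation ∈_X :=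 θ_{T X, X}(1_{T X}) ∈ Φ(T X ⨯ I X). Then for every f : X → Y one has ∃_{1_{T X} ⨯ I f}(∈_X) = (T f ⨯ 1_{I Y})⋆(∈_Y). -/
open CategoryTheory CategoryTheory.Limits Opposite

universe v u

variable {C : Type u} [Category.{v} C]

/-- Reindexing `f⋆ = Φ(f)` along `f` in an indexed category `Φ : Cᵒᵖ ⥤ PartOrd`. -/
def reindex (Φ : Cᵒᵖ ⥤ PartOrd.{v}) {X Y : C} (f : X ⟶ Y) :
    Φ.obj (op Y) →o Φ.obj (op X) :=
  (Φ.map f.op).hom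

theorem membership_relation_shift_general [HasBinaryProducts C]
    (T : Monad C) (I : C ⥤ C) (Φ : Cᵒᵖ ⥤ PartOrd.{v})
    (E : ∀ {X Y : C}, (X ⟶ Y) → (Φ.obj (op X) → Φ.obj (op Y)))
    (θ : ∀ X Y : C, (X ⟶ T.obj Y) ≃ Φ.obj (op (X ⨯ I.obj Y)))
    (hθa : ∀ {X X' Y : C} (f : X ⟶ X') (h : X' ⟶ T.obj Y),
      θ X Y (f ≫ h) = reindex Φ (prod.map f (𝟙 (I.obj Y))) (θ X' Y h))
    (hθb : ∀ {X Y Y' : C} (g : Y ⟶ Y') (h : X ⟶ T.obj Y),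
      θ X Y' (h ≫ T.map g) = E (prod.map (𝟙 X) (I.map g)) (θ X Y h)) :
    ∀ {X Y : C} (f : X ⟶ Y),
      E (prod.map (𝟙 (T.obj X)) (I.map f)) (θ (T.obj X) X (𝟙 (T.obj X))) =
        reindex Φ (prod.map (T.map f) (𝟙 (I.obj Y)))
          (θ (T.obj Y) Y (𝟙 (T.obj Y))) := by
  intro X Y f
  calc E (prod.map (𝟙 (T.obj X)) (I.map f)) (θ (T.obj X) X (𝟙 (T.obj X)))
      = θ (T.obj X) Y (𝟙 (T.obj X) ≫ T.map f) := (hθb f (𝟙 _)).symm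
    _ = θ (T.obj X) Y (T.map f ≫ 𝟙 (T.obj Y)) := by rw [Category.id_comp, Category.comp_id]
    _ = reindex Φ (prod.map (T.map f) (𝟙 (I.obj Y))) (θ (T.obj Y) Y (𝟙 (T.obj Y))) :=
      hθa (T.map f) (𝟙 _)

/-- Given the bifibration structure `∃_f ⊣ f⋆` on an indexed category
`Φ : Cᵒᵖ ⥤ PartOrd` and bijections `θ` internalizing Kleisli arrows `X → T Y`
as elements of `Φ(X ⨯ I Y)` satisfying (A3.3a) and (A3.3b), the membership
relation `∈_X = θ(1_{T X})` satisfies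
`∃_{1 ⨯ I f}(∈_X) = (T f ⨯ 1)⋆(∈_Y)` for every `f : X ⟶ Y`. -/
theorem membership_relation_shift [HasBinaryProducts C]
    (T : Monad C) (I : C ⥤ C) (Φ : Cᵒᵖ ⥤ PartOrd.{v})
    (E : ∀ {X Y : C}, (X ⟶ Y) → (Φ.obj (op X) → Φ.obj (op Y)))
    (hE : ∀ {X Y : C} (f : X ⟶ Y), GaloisConnection (E f) (reindex Φ f))
    (θ : ∀ X Y : C, (X ⟶ T.obj Y) ≃ Φ.obj (op (X ⨯ I.obj Y)))
    (hθa : ∀ {X X' Y : C} (f : X ⟶ X') (h : X' ⟶ T.obj Y),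
      θ X Y (f ≫ h) = reindex Φ (prod.map f (𝟙 (I.obj Y))) (θ X' Y h))
    (hθb : ∀ {X Y Y' : C} (g : Y ⟶ Y') (h : X ⟶ T.obj Y),
      θ X Y' (h ≫ T.map g) = E (prod.map (𝟙 X) (I.map g)) (θ X Y h)) :
    ∀ {X Y : C} (f : X ⟶ Y),
      E (prod.map (𝟙 (T.obj X)) (I.map f)) (θ (T.obj X) X (𝟙 (T.obj X))) =
        reindex Φ (prod.map (T.map f) (𝟙 (I.obj Y)))
          (θ (T.obj Y) Y (𝟙 (T.obj Y))) :=
  membership_relation_shift_general T I Φ E θ hθa hθb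
end

section
/- In the setting of the construction of ϑ (category C with binary products, monad (T, η, μ), endofunctor I, indexed category Φ : Cᵒᵖ ⥤ PartOrd with left adjoints ∃_f ⊣ f⋆, bijections θ_{X,Y} : Hom_C(X, T Y) ≃ Φ(X ⨯ I Y) satisfying (A3.3a) and (A3.3b), endofunctor F with F ∘ I ≅ I ∘ F, predicate lifting σ : Φ ⟹ Φ ∘ F^{op}, relation lifting σ̃_{X,Y} := ∃_{λ_{X,Y}} ∘ σ_{X ⨯ I Y}, and ϑ_X := θ⁻¹(σ̃_{T X, X}(∈_X))), assume the Beck–Chevalley condition holds for the λ-squares: for every f : X → X' and every Y, (F f ⨯ 1_{I F Y})⋆ ∘ ∃_{λ_{X',Y}} = ∃_{λ_{X,Y}} ∘ (F(f ⨯ 1_{I Y}))⋆. Define the identity relation Δ_X := θ_{X,X}(η_X) ∈ Φ(X ⨯ I X). Then σ̃_{X,X}(Δ_X) = Δ_{F X} for all X if and only if ϑ is compatible with the unit of T, i.e. ϑ_X ∘ F(η_X) = η_{F X} for all X. -/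
open CategoryTheory CategoryTheory.Limits Opposite

universe v u

variable {C : Type u} [Category.{v} C]

variable [HasBinaryProducts C]

/-- The map `λ_{X,Y} = ⟨F(pr₁), F(pr₂)⟩ : F(X ⨯ I Y) ⟶ F X ⨯ I F Y`
(using the isomorphism `F I ≅ I F`). -/
noncomputable def lamMap (F I : C ⥤ C) (ε : I ⋙ F ≅ F ⋙ I) (X Y : C) :
    F.obj (X ⨯ I.obj Y) ⟶ F.obj X ⨯ I.obj (F.obj Y) :=
  prod.lift (F.map prod.fst) (F.map prod.snd ≫ ε.hom.app Y)

/-- The relation lifting `σ̃_{X,Y} = ∃_{λ_{X,Y}} ∘ σ_{X ⨯ I Y}`. -/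
noncomputable def relLift (Φ : Cᵒᵖ ⥤ PartOrd.{v})
    (E : ∀ {X Y : C}, (X ⟶ Y) → (Φ.obj (op X) → Φ.obj (op Y)))
    (F I : C ⥤ C) (ε : I ⋙ F ≅ F ⋙ I) (σ : Φ ⟶ F.op ⋙ Φ) (X Y : C)
    (R : Φ.obj (op (X ⨯ I.obj Y))) :
    Φ.obj (op (F.obj X ⨯ I.obj (F.obj Y))) :=
  E (lamMap F I ε X Y)
    ((show Φ.obj (op (X ⨯ I.obj Y)) →o Φ.obj (op (F.obj (X ⨯ I.obj Y))) from
      (σ.app (op (X ⨯ I.obj Y))).hom) R)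

/-- The candidate Kl-law `ϑ_X = θ⁻¹(σ̃_{T X, X}(∈_X)) : F T X ⟶ T F X`. -/
noncomputable def klLawOfRelLift (T : Monad C) (I : C ⥤ C) (Φ : Cᵒᵖ ⥤ PartOrd.{v})
    (E : ∀ {X Y : C}, (X ⟶ Y) → (Φ.obj (op X) → Φ.obj (op Y)))
    (θ : ∀ X Y : C, (X ⟶ T.obj Y) ≃ Φ.obj (op (X ⨯ I.obj Y)))
    (F : C ⥤ C) (ε : I ⋙ F ≅ F ⋙ I) (σ : Φ ⟶ F.op ⋙ Φ) (X : C) :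
    F.obj (T.obj X) ⟶ T.obj (F.obj X) :=
  (θ (F.obj (T.obj X)) (F.obj X)).symm
    (relLift Φ E F I ε σ (T.obj X) X (θ (T.obj X) X (𝟙 (T.obj X))))

/-!
Since `∈_Y` is the generic Kleisli relation (`θ f = (f ⨯ 1)⋆ ∈_Y`), naturality of `σ` and the
Beck–Chevalley condition give `θ(F f ≫ ϑ_Y) = σ̃(θ f)` for every Kleisli arrow `f : X ⟶ T Y`.
For `f = η_X` this reads `θ(F η_X ≫ ϑ_X) = σ̃(Δ_X)`, and `θ` is injective.
-/

section

variable {T : Monad C} {I F : C ⥤ C} {Φ : Cᵒᵖ ⥤ PartOrd.{v}}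
  {E : ∀ {X Y : C}, (X ⟶ Y) → (Φ.obj (op X) → Φ.obj (op Y))}
  {θ : ∀ X Y : C, (X ⟶ T.obj Y) ≃ Φ.obj (op (X ⨯ I.obj Y))}
  {ε : I ⋙ F ≅ F ⋙ I} {σ : Φ ⟶ F.op ⋙ Φ}

theorem theta_eq_reindex_mem
    (hθa : ∀ {X X' Y : C} (f : X ⟶ X') (h : X' ⟶ T.obj Y),
      θ X Y (f ≫ h) = reindex Φ (prod.map f (𝟙 (I.obj Y))) (θ X' Y h))
    {X Y : C} (f : X ⟶ T.obj Y) :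
    θ X Y f = reindex Φ (prod.map f (𝟙 (I.obj Y))) (θ (T.obj Y) Y (𝟙 (T.obj Y))) := by
  rw [← hθa, Category.comp_id]

theorem predLift_reindex {X X' : C} (f : X ⟶ X') (R : Φ.obj (op X')) :
    (σ.app (op X)).hom (reindex Φ f R) = reindex Φ (F.map f) ((σ.app (op X')).hom R) :=
  congrArg (fun g => g.hom R) (σ.naturality f.op)

theorem relLift_reindex
    (hBC : ∀ {X X' : C} (f : X ⟶ X') (Y : C)
      (R : Φ.obj (op (F.obj (X' ⨯ I.obj Y)))),
      reindex Φ (prod.map (F.map f) (𝟙 (I.obj (F.obj Y))))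
          (E (lamMap F I ε X' Y) R) =
        E (lamMap F I ε X Y)
          (reindex Φ (F.map (prod.map f (𝟙 (I.obj Y)))) R))
    {X X' : C} (f : X ⟶ X') (Y : C) (R : Φ.obj (op (X' ⨯ I.obj Y))) :
    reindex Φ (prod.map (F.map f) (𝟙 (I.obj (F.obj Y)))) (relLift Φ E F I ε σ X' Y R) =
      relLift Φ E F I ε σ X Y (reindex Φ (prod.map f (𝟙 (I.obj Y))) R) := by
  rw [relLift, relLift, hBC, predLift_reindex]

theorem theta_comp_klLawOfRelLift
    (hθa : ∀ {X X' Y : C} (f : X ⟶ X') (h : X' ⟶ T.obj Y),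
      θ X Y (f ≫ h) = reindex Φ (prod.map f (𝟙 (I.obj Y))) (θ X' Y h))
    (hBC : ∀ {X X' : C} (f : X ⟶ X') (Y : C)
      (R : Φ.obj (op (F.obj (X' ⨯ I.obj Y)))),
      reindex Φ (prod.map (F.map f) (𝟙 (I.obj (F.obj Y))))
          (E (lamMap F I ε X' Y) R) =
        E (lamMap F I ε X Y)
          (reindex Φ (F.map (prod.map f (𝟙 (I.obj Y)))) R))
    {X Y : C} (f : X ⟶ T.obj Y) :
    θ (F.obj X) (F.obj Y) (F.map f ≫ klLawOfRelLift T I Φ E θ F ε σ Y) =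
      relLift Φ E F I ε σ X Y (θ X Y f) := by
  rw [hθa, klLawOfRelLift, Equiv.apply_symm_apply, relLift_reindex hBC,
    ← theta_eq_reindex_mem hθa]

end

theorem klLawOfRelLift_unit_compatible_general
    (T : Monad C) (I : C ⥤ C) (Φ : Cᵒᵖ ⥤ PartOrd.{v})
    (E : ∀ {X Y : C}, (X ⟶ Y) → (Φ.obj (op X) → Φ.obj (op Y)))
    (θ : ∀ X Y : C, (X ⟶ T.obj Y) ≃ Φ.obj (op (X ⨯ I.obj Y)))
    (hθa : ∀ {X X' Y : C} (f : X ⟶ X') (h : X' ⟶ T.obj Y),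
      θ X Y (f ≫ h) = reindex Φ (prod.map f (𝟙 (I.obj Y))) (θ X' Y h))
    (F : C ⥤ C) (ε : I ⋙ F ≅ F ⋙ I) (σ : Φ ⟶ F.op ⋙ Φ)
    (hBC : ∀ {X X' : C} (f : X ⟶ X') (Y : C)
      (R : Φ.obj (op (F.obj (X' ⨯ I.obj Y)))),
      reindex Φ (prod.map (F.map f) (𝟙 (I.obj (F.obj Y))))
          (E (lamMap F I ε X' Y) R) =
        E (lamMap F I ε X Y)
          (reindex Φ (F.map (prod.map f (𝟙 (I.obj Y)))) R)) :
    (∀ X : C, relLift Φ E F I ε σ X X (θ X X (T.η.app X)) =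
        θ (F.obj X) (F.obj X) (T.η.app (F.obj X))) ↔
      (∀ X : C, F.map (T.η.app X) ≫ klLawOfRelLift T I Φ E θ F ε σ X =
        T.η.app (F.obj X)) := by
  refine forall_congr' fun X => ?_
  rw [← theta_comp_klLawOfRelLift hθa hBC (X := X) (Y := X) (T.η.app X)]
  exact (θ _ _).injective.eq_iff

/-- Assuming the Beck–Chevalley condition for the `λ`-squares, the relation
lifting `σ̃` preserves the identity relation `Δ_X = θ(η_X)` if and only if the
natural transformation `ϑ` is compatible with the unit of the monad `T`. -/
theorem klLawOfRelLift_unit_compatible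
    (T : Monad C) (I : C ⥤ C) (Φ : Cᵒᵖ ⥤ PartOrd.{v})
    (E : ∀ {X Y : C}, (X ⟶ Y) → (Φ.obj (op X) → Φ.obj (op Y)))
    (hE : ∀ {X Y : C} (f : X ⟶ Y), GaloisConnection (E f) (reindex Φ f))
    (θ : ∀ X Y : C, (X ⟶ T.obj Y) ≃ Φ.obj (op (X ⨯ I.obj Y)))
    (hθa : ∀ {X X' Y : C} (f : X ⟶ X') (h : X' ⟶ T.obj Y),
      θ X Y (f ≫ h) = reindex Φ (prod.map f (𝟙 (I.obj Y))) (θ X' Y h))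
    (hθb : ∀ {X Y Y' : C} (g : Y ⟶ Y') (h : X ⟶ T.obj Y),
      θ X Y' (h ≫ T.map g) = E (prod.map (𝟙 X) (I.map g)) (θ X Y h))
    (F : C ⥤ C) (ε : I ⋙ F ≅ F ⋙ I) (σ : Φ ⟶ F.op ⋙ Φ)
    (hBC : ∀ {X X' : C} (f : X ⟶ X') (Y : C)
      (R : Φ.obj (op (F.obj (X' ⨯ I.obj Y)))),
      reindex Φ (prod.map (F.map f) (𝟙 (I.obj (F.obj Y))))
          (E (lamMap F I ε X' Y) R) =
        E (lamMap F I ε X Y)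
          (reindex Φ (F.map (prod.map f (𝟙 (I.obj Y)))) R)) :
    (∀ X : C, relLift Φ E F I ε σ X X (θ X X (T.η.app X)) =
        θ (F.obj X) (F.obj X) (T.η.app (F.obj X))) ↔
      (∀ X : C, F.map (T.η.app X) ≫ klLawOfRelLift T I Φ E θ F ε σ X =
        T.η.app (F.obj X)) :=
  klLawOfRelLift_unit_compatible_general T I Φ E θ hθa F ε σ hBC
end

section
/- In the setting of the construction of ϑ (category C with binary products, monad (T, η, μ), endofunctor I, indexed category Φ : Cᵒᵖ ⥤ PartOrd with left adjoints ∃_f ⊣ f⋆, bijections θ_{X,Y} : Hom_C(X, T Y) ≃ Φ(X ⨯ I Y) satisfying (A3.3a) and (A3.3b), endofunctor F with F ∘ I ≅ I ∘ F, predicate lifting σ : Φ ⟹ Φ ∘ F^{op}, relation lifting σ̃_{X,Y} := ∃_{λ_{X,Y}} ∘ σ_{X ⨯ I Y}, and ϑ_X := θ⁻¹(σ̃_{T X, X}(∈_X))), assume the Beck–Chevalley condition holds for the λ-squares: for every f : X → X' and every Y, (F f ⨯ 1_{I F Y})⋆ ∘ ∃_{λ_{X',Y}} = ∃_{λ_{X,Y}}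 ∘ (F(f ⨯ 1_{I Y}))⋆. Define relational composition by S ⊙ R := θ_{X,Z}(θ⁻¹(S) • θ⁻¹(R)) for R ∈ Φ(X ⨯ I Y), S ∈ Φ(Y ⨯ I Z), where g • f := μ ∘ T g ∘ f is Kleisli composition. If σ̃ preserves relational composition, i.e. σ̃_{X,Z}(S ⊙ R) = σ̃_{Y,Z}(S) ⊙ σ̃_{X,Y}(R) for all such R, S, then ϑ is compatible with the multiplication of T, i.e. ϑ_X ∘ F(μ_X) = μ_{F X} ∘ T(ϑ_X) ∘ ϑ_{T X} for all X. Conversely, if this compatibility with μ holds, then σ̃(S ⊙ R) = σ̃(S) ⊙ σ̃(R) holds at least in the instance R = ∈_X and S = ∈_{T X}. -/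
/-!
Naturality of `σ` and the Beck–Chevalley condition give `σ̃(θ h) = θ(F h ≫ ϑ)` for every Kleisli
arrow `h`. Since `∈_X ⊙ ∈_{T X} = θ μ_X`, the two sides of `σ̃(∈ ⊙ ∈) = σ̃(∈) ⊙ σ̃(∈)` are `θ` of
the two sides of the multiplication law, and `θ` is injective.
-/

open CategoryTheory CategoryTheory.Limits Opposite

universe v u

variable {C : Type u} [Category.{v} C]

variable [HasBinaryProducts C]

/-- Relational composition `S ⊙ R = θ(θ⁻¹(S) • θ⁻¹(R))`, where `•` is Kleisli
composition `g • f = f ≫ T g ≫ μ`. -/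
noncomputable def relCompRel (T : Monad C) (I : C ⥤ C) (Φ : Cᵒᵖ ⥤ PartOrd.{v})
    (θ : ∀ X Y : C, (X ⟶ T.obj Y) ≃ Φ.obj (op (X ⨯ I.obj Y)))
    {X Y Z : C} (S : Φ.obj (op (Y ⨯ I.obj Z))) (R : Φ.obj (op (X ⨯ I.obj Y))) :
    Φ.obj (op (X ⨯ I.obj Z)) :=
  θ X Z ((θ X Y).symm R ≫ T.map ((θ Y Z).symm S) ≫ T.μ.app Z)

def predLift {D : Type*} [Category D] (Φ : Dᵒᵖ ⥤ PartOrd) (F : D ⥤ D) (σ : Φ ⟶ F.op ⋙ Φ)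
    (X : D) : Φ.obj (op X) →o Φ.obj (op (F.obj X)) :=
  (σ.app (op X)).hom

lemma predLift_reindex_s11 {D : Type*} [Category D] (Φ : Dᵒᵖ ⥤ PartOrd) (F : D ⥤ D)
    (σ : Φ ⟶ F.op ⋙ Φ) {X Y : D} (f : X ⟶ Y) (P : Φ.obj (op Y)) :
    predLift Φ F σ X (reindex Φ f P) = reindex Φ (F.map f) (predLift Φ F σ Y P) :=
  congrArg (fun g => (show _ →o _ from g.hom) P) (σ.naturality f.op)

section KleisliRelations

variable (T : Monad C) (I : C ⥤ C) (Φ : Cᵒᵖ ⥤ PartOrd.{v})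
  (E : ∀ {X Y : C}, (X ⟶ Y) → (Φ.obj (op X) → Φ.obj (op Y)))
  (θ : ∀ X Y : C, (X ⟶ T.obj Y) ≃ Φ.obj (op (X ⨯ I.obj Y)))
  (F : C ⥤ C) (ε : I ⋙ F ≅ F ⋙ I) (σ : Φ ⟶ F.op ⋙ Φ)

lemma relCompRel_theta {X Y Z : C} (g : Y ⟶ T.obj Z) (f : X ⟶ T.obj Y) :
    relCompRel T I Φ θ (θ Y Z g) (θ X Y f) = θ X Z (f ≫ T.map g ≫ T.μ.app Z) := by
  simp only [relCompRel, Equiv.symm_apply_apply]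

lemma relCompRel_mem_mem (X : C) :
    relCompRel T I Φ θ (θ (T.obj X) X (𝟙 _)) (θ (T.obj (T.obj X)) (T.obj X) (𝟙 _)) =
      θ (T.obj (T.obj X)) X (T.μ.app X) := by
  rw [relCompRel_theta, Category.id_comp, T.map_id, Category.id_comp]

lemma relLift_mem (X : C) :
    relLift Φ E F I ε σ (T.obj X) X (θ (T.obj X) X (𝟙 _)) =
      θ (F.obj (T.obj X)) (F.obj X) (klLawOfRelLift T I Φ E θ F ε σ X) :=
  ((θ _ _).apply_symm_apply _).symm

/-- Every relation `θ h` is a reindexing `(h ⨯ 1)⋆ ∈` of the membership relation; naturality of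
`σ` and Beck–Chevalley move the reindexing past `σ̃`, where `σ̃(∈) = θ ϑ`. -/
lemma relLift_theta
    (hθa : ∀ {X X' Y : C} (f : X ⟶ X') (h : X' ⟶ T.obj Y),
      θ X Y (f ≫ h) = reindex Φ (prod.map f (𝟙 (I.obj Y))) (θ X' Y h))
    (hBC : ∀ {X X' : C} (f : X ⟶ X') (Y : C)
      (R : Φ.obj (op (F.obj (X' ⨯ I.obj Y)))),
      reindex Φ (prod.map (F.map f) (𝟙 (I.obj (F.obj Y))))
          (E (lamMap F I ε X' Y) R) =
        E (lamMap F I ε X Y)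
          (reindex Φ (F.map (prod.map f (𝟙 (I.obj Y)))) R))
    {X Y : C} (h : X ⟶ T.obj Y) :
    relLift Φ E F I ε σ X Y (θ X Y h) =
      θ (F.obj X) (F.obj Y) (F.map h ≫ klLawOfRelLift T I Φ E θ F ε σ Y) := by
  have hmem : θ X Y h = reindex Φ (prod.map h (𝟙 _)) (θ (T.obj Y) Y (𝟙 _)) := by
    rw [← hθa, Category.comp_id]
  calc relLift Φ E F I ε σ X Y (θ X Y h)
      = E (lamMap F I ε X Y) (reindex Φ (F.map (prod.map h (𝟙 _)))
          (predLift Φ F σ _ (θ (T.obj Y) Y (𝟙 _)))) := by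
        rw [hmem, ← predLift_reindex_s11]; rfl
    _ = reindex Φ (prod.map (F.map h) (𝟙 _))
          (relLift Φ E F I ε σ (T.obj Y) Y (θ (T.obj Y) Y (𝟙 _))) := (hBC h Y _).symm
    _ = θ (F.obj X) (F.obj Y) (F.map h ≫ klLawOfRelLift T I Φ E θ F ε σ Y) := by
        rw [relLift_mem, hθa]

lemma relLift_mem_comp_mem_iff
    (hθa : ∀ {X X' Y : C} (f : X ⟶ X') (h : X' ⟶ T.obj Y),
      θ X Y (f ≫ h) = reindex Φ (prod.map f (𝟙 (I.obj Y))) (θ X' Y h))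
    (hBC : ∀ {X X' : C} (f : X ⟶ X') (Y : C)
      (R : Φ.obj (op (F.obj (X' ⨯ I.obj Y)))),
      reindex Φ (prod.map (F.map f) (𝟙 (I.obj (F.obj Y))))
          (E (lamMap F I ε X' Y) R) =
        E (lamMap F I ε X Y)
          (reindex Φ (F.map (prod.map f (𝟙 (I.obj Y)))) R))
    (X : C) :
    relLift Φ E F I ε σ (T.obj (T.obj X)) X
        (relCompRel T I Φ θ (θ (T.obj X) X (𝟙 _)) (θ (T.obj (T.obj X)) (T.obj X) (𝟙 _))) =
      relCompRel T I Φ θ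
        (relLift Φ E F I ε σ (T.obj X) X (θ (T.obj X) X (𝟙 _)))
        (relLift Φ E F I ε σ (T.obj (T.obj X)) (T.obj X) (θ (T.obj (T.obj X)) (T.obj X) (𝟙 _))) ↔
    F.map (T.μ.app X) ≫ klLawOfRelLift T I Φ E θ F ε σ X =
      klLawOfRelLift T I Φ E θ F ε σ (T.obj X) ≫
        T.map (klLawOfRelLift T I Φ E θ F ε σ X) ≫ T.μ.app (F.obj X) := by
  rw [relCompRel_mem_mem, relLift_theta T I Φ E θ F ε σ hθa hBC, relLift_mem, relLift_mem,
    relCompRel_theta]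
  exact (θ _ _).injective.eq_iff

end KleisliRelations

theorem klLawOfRelLift_mult_compatible_general
    (T : Monad C) (I : C ⥤ C) (Φ : Cᵒᵖ ⥤ PartOrd.{v})
    (E : ∀ {X Y : C}, (X ⟶ Y) → (Φ.obj (op X) → Φ.obj (op Y)))
    (θ : ∀ X Y : C, (X ⟶ T.obj Y) ≃ Φ.obj (op (X ⨯ I.obj Y)))
    (hθa : ∀ {X X' Y : C} (f : X ⟶ X') (h : X' ⟶ T.obj Y),
      θ X Y (f ≫ h) = reindex Φ (prod.map f (𝟙 (I.obj Y))) (θ X' Y h))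
    (F : C ⥤ C) (ε : I ⋙ F ≅ F ⋙ I) (σ : Φ ⟶ F.op ⋙ Φ)
    (hBC : ∀ {X X' : C} (f : X ⟶ X') (Y : C)
      (R : Φ.obj (op (F.obj (X' ⨯ I.obj Y)))),
      reindex Φ (prod.map (F.map f) (𝟙 (I.obj (F.obj Y))))
          (E (lamMap F I ε X' Y) R) =
        E (lamMap F I ε X Y)
          (reindex Φ (F.map (prod.map f (𝟙 (I.obj Y)))) R)) :
    ((∀ (X Y Z : C) (R : Φ.obj (op (X ⨯ I.obj Y)))
        (S : Φ.obj (op (Y ⨯ I.obj Z))),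
        relLift Φ E F I ε σ X Z (relCompRel T I Φ θ S R) =
          relCompRel T I Φ θ (relLift Φ E F I ε σ Y Z S)
            (relLift Φ E F I ε σ X Y R)) →
      (∀ X : C, F.map (T.μ.app X) ≫ klLawOfRelLift T I Φ E θ F ε σ X =
        klLawOfRelLift T I Φ E θ F ε σ (T.obj X) ≫
          T.map (klLawOfRelLift T I Φ E θ F ε σ X) ≫ T.μ.app (F.obj X))) ∧
    ((∀ X : C, F.map (T.μ.app X) ≫ klLawOfRelLift T I Φ E θ F ε σ X =
        klLawOfRelLift T I Φ E θ F ε σ (T.obj X) ≫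
          T.map (klLawOfRelLift T I Φ E θ F ε σ X) ≫ T.μ.app (F.obj X)) →
      (∀ X : C,
        relLift Φ E F I ε σ (T.obj (T.obj X)) X
            (relCompRel T I Φ θ (θ (T.obj X) X (𝟙 (T.obj X)))
              (θ (T.obj (T.obj X)) (T.obj X) (𝟙 (T.obj (T.obj X))))) =
          relCompRel T I Φ θ
            (relLift Φ E F I ε σ (T.obj X) X (θ (T.obj X) X (𝟙 (T.obj X))))
            (relLift Φ E F I ε σ (T.obj (T.obj X)) (T.obj X)
              (θ (T.obj (T.obj X)) (T.obj X) (𝟙 (T.obj (T.obj X))))))) := by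
  refine ⟨fun hcomp X => ?_, fun hmul X => ?_⟩
  · exact (relLift_mem_comp_mem_iff T I Φ E θ F ε σ hθa hBC X).1 (hcomp _ _ _ _ _)
  · exact (relLift_mem_comp_mem_iff T I Φ E θ F ε σ hθa hBC X).2 (hmul X)

/-- Assuming the Beck–Chevalley condition for the `λ`-squares: if the relation
lifting `σ̃` preserves relational composition then `ϑ` is compatible with the
multiplication of `T`; conversely, compatibility with the multiplication
implies preservation of relational composition at least in the instance
`R = ∈_{T X}`, `S = ∈_X`. -/
theorem klLawOfRelLift_mult_compatible
    (T : Monad C) (I : C ⥤ C) (Φ : Cᵒᵖ ⥤ PartOrd.{v})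
    (E : ∀ {X Y : C}, (X ⟶ Y) → (Φ.obj (op X) → Φ.obj (op Y)))
    (hE : ∀ {X Y : C} (f : X ⟶ Y), GaloisConnection (E f) (reindex Φ f))
    (θ : ∀ X Y : C, (X ⟶ T.obj Y) ≃ Φ.obj (op (X ⨯ I.obj Y)))
    (hθa : ∀ {X X' Y : C} (f : X ⟶ X') (h : X' ⟶ T.obj Y),
      θ X Y (f ≫ h) = reindex Φ (prod.map f (𝟙 (I.obj Y))) (θ X' Y h))
    (hθb : ∀ {X Y Y' : C} (g : Y ⟶ Y') (h : X ⟶ T.obj Y),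
      θ X Y' (h ≫ T.map g) = E (prod.map (𝟙 X) (I.map g)) (θ X Y h))
    (F : C ⥤ C) (ε : I ⋙ F ≅ F ⋙ I) (σ : Φ ⟶ F.op ⋙ Φ)
    (hBC : ∀ {X X' : C} (f : X ⟶ X') (Y : C)
      (R : Φ.obj (op (F.obj (X' ⨯ I.obj Y)))),
      reindex Φ (prod.map (F.map f) (𝟙 (I.obj (F.obj Y))))
          (E (lamMap F I ε X' Y) R) =
        E (lamMap F I ε X Y)
          (reindex Φ (F.map (prod.map f (𝟙 (I.obj Y)))) R)) :
    ((∀ (X Y Z : C) (R : Φ.obj (op (X ⨯ I.obj Y)))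
        (S : Φ.obj (op (Y ⨯ I.obj Z))),
        relLift Φ E F I ε σ X Z (relCompRel T I Φ θ S R) =
          relCompRel T I Φ θ (relLift Φ E F I ε σ Y Z S)
            (relLift Φ E F I ε σ X Y R)) →
      (∀ X : C, F.map (T.μ.app X) ≫ klLawOfRelLift T I Φ E θ F ε σ X =
        klLawOfRelLift T I Φ E θ F ε σ (T.obj X) ≫
          T.map (klLawOfRelLift T I Φ E θ F ε σ X) ≫ T.μ.app (F.obj X))) ∧
    ((∀ X : C, F.map (T.μ.app X) ≫ klLawOfRelLift T I Φ E θ F ε σ X =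
        klLawOfRelLift T I Φ E θ F ε σ (T.obj X) ≫
          T.map (klLawOfRelLift T I Φ E θ F ε σ X) ≫ T.μ.app (F.obj X)) →
      (∀ X : C,
        relLift Φ E F I ε σ (T.obj (T.obj X)) X
            (relCompRel T I Φ θ (θ (T.obj X) X (𝟙 (T.obj X)))
              (θ (T.obj (T.obj X)) (T.obj X) (𝟙 (T.obj (T.obj X))))) =
          relCompRel T I Φ θ
            (relLift Φ E F I ε σ (T.obj X) X (θ (T.obj X) X (𝟙 (T.obj X))))
            (relLift Φ E F I ε σ (T.obj (T.obj X)) (T.obj X)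
              (θ (T.obj (T.obj X)) (T.obj X) (𝟙 (T.obj (T.obj X))))))) :=
  klLawOfRelLift_mult_compatible_general T I Φ E θ hθa F ε σ hBC
end

section
/- Let X, 𝔸, K be types, trans : X → 𝔸 → K → X → Prop a transition relation, and acc : Set X a set of accepting states. Define the reachability relation by x ⇝[[], k] x' ↔ x' = x and x ⇝[a :: w, k] x'' ↔ ∃ x', trans x a k x' ∧ x' ⇝[w, k] x'', and the language L x k := { w : List 𝔸 | ∃ x', x ⇝[w, k] x' ∧ x' ∈ acc }. Then the function g₀ : K → X → Set (K × List 𝔸) defined by g₀ k x = { (k, w) | w ∈ L x k } is the unique function g : K → X → Set (K × List 𝔸) satisfying, for all k, k' : K and x : X: (k', []) ∈ g k x ↔ (k' = k ∧ x ∈ acc), and for all a : 𝔸 and w : List 𝔸, (k', a :: w) ∈ g k x ↔ ∃ x', trans x a k x' ∧ (k', w) ∈ g k x'. -/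
universe u

variable {X 𝔸 K : Type u}

/-- Reachability in a conditional transition system:
`x ⇝[[], k] x' ↔ x' = x` and
`x ⇝[a :: w, k] x'' ↔ ∃ x', trans x a k x' ∧ x' ⇝[w, k] x''`. -/
def ctsReach (trans : X → 𝔸 → K → X → Prop) : X → List 𝔸 → K → X → Prop
  | x, [], _, x' => x' = x
  | x, a :: w, k, x'' => ∃ x', trans x a k x' ∧ ctsReach trans x' w k x''

/-- The `k`-language of a state. -/
def ctsLang (trans : X → 𝔸 → K → X → Prop) (acc : Set X) (x : X) (k : K) :
    Set (List 𝔸) :=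
  {w | ∃ x', ctsReach trans x w k x' ∧ x' ∈ acc}

/-- For a CTS without upgrades, the map `(k, x) ↦ {k} × L x k` is the unique
coalgebra homomorphism into the final coalgebra, i.e. the unique map satisfying
the two displayed equivalences (coinductive characterisation of conditional
language equivalence). -/
theorem cts_language_unique_hom (trans : X → 𝔸 → K → X → Prop) (acc : Set X)
    (g₀ : K → X → Set (K × List 𝔸))
    (hg₀ : ∀ k x, g₀ k x = {p | p.1 = k ∧ p.2 ∈ ctsLang trans acc x k}) :
    ((∀ (k k' : K) (x : X),
        (k', ([] : List 𝔸)) ∈ g₀ k x ↔ (k' = k ∧ x ∈ acc)) ∧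
      (∀ (k k' : K) (x : X) (a : 𝔸) (w : List 𝔸),
        (k', a :: w) ∈ g₀ k x ↔ ∃ x', trans x a k x' ∧ (k', w) ∈ g₀ k x')) ∧
    ∀ g : K → X → Set (K × List 𝔸),
      ((∀ (k k' : K) (x : X),
          (k', ([] : List 𝔸)) ∈ g k x ↔ (k' = k ∧ x ∈ acc)) ∧
        (∀ (k k' : K) (x : X) (a : 𝔸) (w : List 𝔸),
          (k', a :: w) ∈ g k x ↔ ∃ x', trans x a k x' ∧ (k', w) ∈ g k x')) →
      g = g₀ := by

  have mem : ∀ k k' x (w : List 𝔸), (k', w) ∈ g₀ k x ↔ (k' = k ∧ w ∈ ctsLang trans acc x k) := by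
    intro k k' x w
    rw [hg₀]; rfl
  constructor
  · constructor
    · intro k k' x
      rw [mem]
      simp [ctsLang, ctsReach]
    · intro k k' x a w
      rw [mem]
      constructor
      · rintro ⟨rfl, x'', ⟨x', ht, hr⟩, hacc⟩
        exact ⟨x', ht, (mem _ _ x' w).2 ⟨rfl, x'', hr, hacc⟩⟩
      · rintro ⟨x', ht, hw⟩
        obtain ⟨rfl, x'', hr, hacc⟩ := (mem _ _ x' w).1 hw
        exact ⟨rfl, x'', ⟨x', ht, hr⟩, hacc⟩
  · rintro g ⟨h1, h2⟩
    funext k x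
    ext ⟨k', w⟩
    induction w generalizing x with
    | nil => rw [mem]; simp [h1, ctsLang, ctsReach]
    | cons a w ih =>
      rw [h2, mem]
      constructor
      · rintro ⟨x', ht, hw⟩
        obtain ⟨rfl, x'', hr, hacc⟩ := (mem _ _ x' w).1 ((ih x').1 hw)
        exact ⟨rfl, x'', ⟨x', ht, hr⟩, hacc⟩
      · rintro ⟨rfl, x'', ⟨x', ht, hr⟩, hacc⟩
        exact ⟨x', ht, (ih x').2 ((mem _ _ x' w).2 ⟨rfl, x'', hr, hacc⟩)⟩
end

section
/- Let X, 𝔸, K be types and trans : X → 𝔸 → K → X → Prop a transition relation. Define the reachability relation by x ⇝[[], k] x' ↔ x' = x and x ⇝[a :: w, k] x'' ↔ ∃ x', trans x a k x' ∧ x' ⇝[w, k] x'', the enabled set en x k := { a : 𝔸 | ∃ x', trans x a k x' }, and the ready pairs R x k := { (w, U) : List 𝔸 × Set 𝔸 | ∃ x', x ⇝[w, k] x' ∧ U = en x' k }. Then the function g₀ : K → X → Set (K × List 𝔸 × Set 𝔸) defined by g₀ k x = { (k, w, U) | (w, U) ∈ R x k } is the unique function g : K → X → Set (K × List 𝔸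 × Set 𝔸) satisfying, for all k, k' : K, x : X and U : Set 𝔸: (k', [], U) ∈ g k x ↔ (k' = k ∧ U = en x k), and for all a : 𝔸, w : List 𝔸, (k', a :: w, U) ∈ g k x ↔ ∃ x', trans x a k x' ∧ (k', w, U) ∈ g k x'. -/
universe u

variable {X 𝔸 K : Type u}

/-- The set of actions enabled at a state `x` under condition `k`. -/
def ctsEnabled (trans : X → 𝔸 → K → X → Prop) (x : X) (k : K) : Set 𝔸 :=
  {a | ∃ x', trans x a k x'}

/-- The ready pairs of a state `x` under condition `k`. -/
def ctsReady (trans : X → 𝔸 → K → X → Prop) (x : X) (k : K) :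
    Set (List 𝔸 × Set 𝔸) :=
  {p | ∃ x', ctsReach trans x p.1 k x' ∧ p.2 = ctsEnabled trans x' k}

/-- For a CTS without upgrades, the map `(k, x) ↦ {k} × R x k` (ready pairs) is
the unique coalgebra homomorphism into the final coalgebra, i.e. the unique map
satisfying the two displayed equivalences (coinductive characterisation of
conditional ready equivalence). -/
theorem cts_ready_unique_hom (trans : X → 𝔸 → K → X → Prop)
    (g₀ : K → X → Set (K × List 𝔸 × Set 𝔸))
    (hg₀ : ∀ k x, g₀ k x = {p | p.1 = k ∧ p.2 ∈ ctsReady trans x k}) :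
    ((∀ (k k' : K) (x : X) (U : Set 𝔸),
        (k', ([] : List 𝔸), U) ∈ g₀ k x ↔ (k' = k ∧ U = ctsEnabled trans x k)) ∧
      (∀ (k k' : K) (x : X) (a : 𝔸) (w : List 𝔸) (U : Set 𝔸),
        (k', a :: w, U) ∈ g₀ k x ↔ ∃ x', trans x a k x' ∧ (k', w, U) ∈ g₀ k x')) ∧
    ∀ g : K → X → Set (K × List 𝔸 × Set 𝔸),
      ((∀ (k k' : K) (x : X) (U : Set 𝔸),
          (k', ([] : List 𝔸), U) ∈ g k x ↔ (k' = k ∧ U = ctsEnabled trans x k)) ∧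
        (∀ (k k' : K) (x : X) (a : 𝔸) (w : List 𝔸) (U : Set 𝔸),
          (k', a :: w, U) ∈ g k x ↔ ∃ x', trans x a k x' ∧ (k', w, U) ∈ g k x')) →
      g = g₀ := by
  have key : ∀ (g : K → X → Set (K × List 𝔸 × Set 𝔸)),
      ((∀ (k k' : K) (x : X) (U : Set 𝔸),
          (k', ([] : List 𝔸), U) ∈ g k x ↔ (k' = k ∧ U = ctsEnabled trans x k)) ∧
        (∀ (k k' : K) (x : X) (a : 𝔸) (w : List 𝔸) (U : Set 𝔸),
          (k', a :: w, U) ∈ g k x ↔ ∃ x', trans x a k x' ∧ (k', w, U) ∈ g k x')) →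
      ∀ (w : List 𝔸) (k k' : K) (x : X) (U : Set 𝔸),
        (k', w, U) ∈ g k x ↔ (k' = k ∧ (w, U) ∈ ctsReady trans x k) := by
    intro g ⟨h1, h2⟩ w
    induction w with
    | nil =>
      intro k k' x U
      rw [h1]
      constructor
      · rintro ⟨rfl, rfl⟩
        exact ⟨rfl, x, rfl, rfl⟩
      · rintro ⟨rfl, x', hx', hU⟩
        cases hx'
        exact ⟨rfl, hU⟩
    | cons a w ih =>
      intro k k' x U
      rw [h2]
      constructor
      · rintro ⟨x', ht, hw⟩
        obtain ⟨rfl, x'', hr, hU⟩ := (ih k k' x' U).1 hw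
        exact ⟨rfl, x'', ⟨x', ht, hr⟩, hU⟩
      · rintro ⟨rfl, x'', ⟨x', ht, hr⟩, hU⟩
        exact ⟨x', ht, (ih _ _ x' U).2 ⟨rfl, x'', hr, hU⟩⟩
  have hg₀' : ∀ (k k' : K) (x : X) (w : List 𝔸) (U : Set 𝔸),
      (k', w, U) ∈ g₀ k x ↔ (k' = k ∧ (w, U) ∈ ctsReady trans x k) := by
    intro k k' x w U
    rw [hg₀]; rfl
  refine ⟨⟨?_, ?_⟩, ?_⟩
  · intro k k' x U
    rw [hg₀']
    constructor
    · rintro ⟨rfl, x', hx', hU⟩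
      cases hx'
      exact ⟨rfl, hU⟩
    · rintro ⟨rfl, rfl⟩
      exact ⟨rfl, x, rfl, rfl⟩
  · intro k k' x a w U
    simp only [hg₀']
    constructor
    · rintro ⟨rfl, x'', ⟨x', ht, hr⟩, hU⟩
      exact ⟨x', ht, rfl, x'', hr, hU⟩
    · rintro ⟨x', ht, rfl, x'', hr, hU⟩
      exact ⟨rfl, x'', ⟨x', ht, hr⟩, hU⟩
  · intro g hg
    funext k x
    ext ⟨k', w, U⟩
    rw [key g hg, hg₀']
end

section
/- Let X, 𝔸 be types, K a partial order, acc : Set X, and trans : X → 𝔸 → K → X → Prop a transition relation that is downward closed in the condition: if trans x a k x' and k' ≤ k then trans x a k' x'. Define the reachability relation by x ⇝[[], k] x' ↔ x' = x and x ⇝[a :: w, k] x'' ↔ ∃ x', trans x a k x' ∧ x' ⇝[w, k] x'', and the language L x k := { w : List 𝔸 | ∃ x', x ⇝[w, k] x' ∧ x' ∈ acc }. Then the function g₀ : K → X → Set (K × List 𝔸) defined by g₀ k x = { (k', w) | k' ≤ k ∧ w ∈ L x k' } is the unique function g : K → X → Set (K × List 𝔸) satisfying, for all k, k' : K and x : X: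 (k', []) ∈ g k x ↔ (k' ≤ k ∧ x ∈ acc), and for all k'' : K, a : 𝔸, w : List 𝔸, (k'', a :: w) ∈ g k x ↔ ∃ k' x', k' ≤ k ∧ trans x a k' x' ∧ (k'', w) ∈ g k' x'. -/
universe u

variable {X 𝔸 K : Type u}

/-- For a CTS with upgrades (over a partially ordered set `K` of conditions,
with a transition relation downward closed in the condition), the map
`(k, x) ↦ ⋃_{k' ≤ k} {k'} × L x k'` is the unique coalgebra homomorphism into
the final coalgebra, i.e. the unique map satisfying the two displayed
equivalences (coinductive characterisation of conditional language equivalence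
in the presence of upgrades). -/
theorem cts_upgrades_language_unique_hom [PartialOrder K]
    (trans : X → 𝔸 → K → X → Prop) (acc : Set X)
    (htrans : ∀ x a k x' k', trans x a k x' → k' ≤ k → trans x a k' x')
    (g₀ : K → X → Set (K × List 𝔸))
    (hg₀ : ∀ k x, g₀ k x = {p | p.1 ≤ k ∧ p.2 ∈ ctsLang trans acc x p.1}) :
    ((∀ (k k' : K) (x : X),
        (k', ([] : List 𝔸)) ∈ g₀ k x ↔ (k' ≤ k ∧ x ∈ acc)) ∧
      (∀ (k k'' : K) (x : X) (a : 𝔸) (w : List 𝔸),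
        (k'', a :: w) ∈ g₀ k x ↔
          ∃ k' x', k' ≤ k ∧ trans x a k' x' ∧ (k'', w) ∈ g₀ k' x')) ∧
    ∀ g : K → X → Set (K × List 𝔸),
      ((∀ (k k' : K) (x : X),
          (k', ([] : List 𝔸)) ∈ g k x ↔ (k' ≤ k ∧ x ∈ acc)) ∧
        (∀ (k k'' : K) (x : X) (a : 𝔸) (w : List 𝔸),
          (k'', a :: w) ∈ g k x ↔
            ∃ k' x', k' ≤ k ∧ trans x a k' x' ∧ (k'', w) ∈ g k' x')) →
      g = g₀ := by
  have hmem : ∀ (k k'' : K) (x : X) (w : List 𝔸),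
      (k'', w) ∈ g₀ k x ↔ (k'' ≤ k ∧ w ∈ ctsLang trans acc x k'') := by
    intro k k'' x w; rw [hg₀]; rfl
  have hnil : ∀ (k k' : K) (x : X),
      (k', ([] : List 𝔸)) ∈ g₀ k x ↔ (k' ≤ k ∧ x ∈ acc) := by
    intro k k' x
    rw [hmem]
    constructor
    · rintro ⟨hle, x', hr, hx'⟩
      cases hr; exact ⟨hle, hx'⟩
    · rintro ⟨hle, hx⟩
      exact ⟨hle, x, rfl, hx⟩
  have hcons : ∀ (k k'' : K) (x : X) (a : 𝔸) (w : List 𝔸),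
      (k'', a :: w) ∈ g₀ k x ↔
        ∃ k' x', k' ≤ k ∧ trans x a k' x' ∧ (k'', w) ∈ g₀ k' x' := by
    intro k k'' x a w
    rw [hmem]
    constructor
    · rintro ⟨hle, x'', ⟨x', ht, hr⟩, hx''⟩
      exact ⟨k'', x', hle, ht, (hmem k'' k'' x' w).2 ⟨le_refl _, x'', hr, hx''⟩⟩
    · rintro ⟨k', x', hle, ht, hw⟩
      obtain ⟨hle', x'', hr, hx''⟩ := (hmem k' k'' x' w).1 hw
      exact ⟨le_trans hle' hle, x'', ⟨x', htrans x a k' x' k'' ht hle', hr⟩, hx''⟩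
  refine ⟨⟨hnil, hcons⟩, ?_⟩
  rintro g ⟨gnil, gcons⟩
  funext k x
  ext ⟨k'', w⟩
  induction w generalizing k x with
  | nil => rw [gnil, hnil]
  | cons a w ih =>
    rw [gcons, hcons]
    constructor
    · rintro ⟨k', x', h1, h2, h3⟩; exact ⟨k', x', h1, h2, (ih k' x').1 h3⟩
    · rintro ⟨k', x', h1, h2, h3⟩; exact ⟨k', x', h1, h2, (ih k' x').2 h3⟩
end
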